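/- arXiv:2110.08039 — 8 statements merged into one kernel-verified Lean document; each statement's English description precedes it below -/
import Mathlib

section
/- Let n₁, n₂ ∈ ℝ³ be linearly independent nonzero vectors, e⊥ a unit vector perpendicular to both, and for a vector n let e∥(n) = e⊥ × (n/|n|). Let u₁, u₂ ∈ ℂ³ satisfy u₁ · n₁ = 0 and u₂ · n₂ = 0 (using the ℂ-bilinear dot product), and write uⱼ = uⱼ∥ e∥(nⱼ) + uⱼ⊥ e⊥. Then the component of (u₁ · n₂)u₂ + (u₂ · n₁)u₁ along e∥(n₁+n₂) equals u₁∥ u₂∥ · ((n₁ × n₂)·e⊥)/(|n₁||n₂||n₁+n₂|) · (|n₂|² − |n₁|²), and its component along e⊥ equals ((n₁ × n₂)·e⊥)/(|n₁||n₂|) · (u₁∥ u₂⊥ |n₂| − u₂∥ u₁⊥ |n₁|). -/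
open scoped Classical

noncomputable section

abbrev V3 := Fin 3 → ℝ
abbrev C3 := Fin 3 → ℂ

/-- Canonical inclusion of real vectors into `ℂ³`. -/
def toC (v : V3) : C3 := fun i => (v i : ℂ)

/-- Real dot product. -/
def dotR (u v : V3) : ℝ := ∑ i, u i * v i

/-- ℂ-bilinear dot product on `ℂ³`. -/
def dotC (u v : C3) : ℂ := ∑ i, u i * v i

/-- Euclidean norm of a vector of `ℝ³`. -/
def norm3 (v : V3) : ℝ := Real.sqrt (dotR v v)

/-- Cross product on `ℝ³`. -/
def crossR (u v : V3) : V3 :=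
  ![u 1 * v 2 - u 2 * v 1, u 2 * v 0 - u 0 * v 2, u 0 * v 1 - u 1 * v 0]

/-- ℂ-bilinear cross product on `ℂ³`. -/
def crossC (u v : C3) : C3 :=
  ![u 1 * v 2 - u 2 * v 1, u 2 * v 0 - u 0 * v 2, u 0 * v 1 - u 1 * v 0]

/-- Orthogonal projection of `ℂ³` onto `{v : m · v = 0}` (for a real frequency `m`). -/
def projC (m : V3) (v : C3) : C3 :=
  v - (dotC (toC m) v / ((dotR m m : ℝ) : ℂ)) • toC m

/-- Rodrigues rotation formula (unit axis `a`, cosine `c`, sine `s`). -/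
def rodriguesR (a : V3) (c s : ℝ) (v : V3) : V3 :=
  c • v + s • crossR a v + ((1 - c) * dotR a v) • a

/-- Complexified Rodrigues rotation formula; since the coefficients are real this acts on the
real and imaginary parts separately. -/
def rodriguesC (a : C3) (c s : ℂ) (v : C3) : C3 :=
  c • v + s • crossC a v + ((1 - c) * dotC a v) • a

/-- The rotation `R_{ω₁ ↦ ω₂}` around the axis `ω₁ × ω₂` by the angle `θ ∈ (0,π)` with
`cos θ = ω₁ · ω₂` (for unit vectors `ω₁ ≠ ±ω₂`, so that `sin θ = |ω₁ × ω₂|`). -/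
def geoRot (ω₁ ω₂ : V3) (v : V3) : V3 :=
  rodriguesR ((norm3 (crossR ω₁ ω₂))⁻¹ • crossR ω₁ ω₂) (dotR ω₁ ω₂) (norm3 (crossR ω₁ ω₂)) v

/-- The rotation `R_{ω₁ ↦ ω₂}` extended complex-linearly to `ℂ³`. -/
def geoRotC (ω₁ ω₂ : V3) (v : C3) : C3 :=
  rodriguesC (toC ((norm3 (crossR ω₁ ω₂))⁻¹ • crossR ω₁ ω₂)) ((dotR ω₁ ω₂ : ℝ) : ℂ)
    ((norm3 (crossR ω₁ ω₂) : ℝ) : ℂ) v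

/-- Rotation around the unit axis `a` by the angle `α`, extended complex-linearly to `ℂ³`. -/
def axisRotC (a : V3) (α : ℝ) (v : C3) : C3 :=
  rodriguesC (toC a) ((Real.cos α : ℝ) : ℂ) ((Real.sin α : ℝ) : ℂ) v

/-- `e∥(n) = e⊥ × (n/|n|)`. -/
def ePar (ePerp : V3) (n : V3) : V3 := crossR ePerp ((norm3 n)⁻¹ • n)

/-- Partial derivative of a real-valued function on `ℝ³`. -/
def pderivR (f : V3 → ℝ) (i : Fin 3) (x : V3) : ℝ := fderiv ℝ f x (Pi.single i 1)

/-- Partial derivative of a complex-valued function on `ℝ³`. -/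
def pderivC (f : V3 → ℂ) (i : Fin 3) (x : V3) : ℂ := fderiv ℝ f x (Pi.single i 1)

/-- Curl of a real vector field on `ℝ³`. -/
def curlR (u : V3 → V3) (x : V3) : V3 :=
  ![pderivR (fun y => u y 2) 1 x - pderivR (fun y => u y 1) 2 x,
    pderivR (fun y => u y 0) 2 x - pderivR (fun y => u y 2) 0 x,
    pderivR (fun y => u y 1) 0 x - pderivR (fun y => u y 0) 1 x]

/-- Curl of a complex vector field on `ℝ³`. -/
def curlC (u : V3 → C3) (x : V3) : C3 :=
  ![pderivC (fun y => u y 2) 1 x - pderivC (fun y => u y 1) 2 x,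
    pderivC (fun y => u y 0) 2 x - pderivC (fun y => u y 2) 0 x,
    pderivC (fun y => u y 1) 0 x - pderivC (fun y => u y 0) 1 x]

/-- Real and imaginary parts of a complex vector, as real vectors. -/
def reV (u : C3) : V3 := fun i => (u i).re
def imV (u : C3) : V3 := fun i => (u i).im

section Helpers

lemma dotR_comm' (u v : V3) : dotR u v = dotR v u := by
  simp [dotR, Fin.sum_univ_three]; ring

lemma dotC_toC' (p r : V3) : dotC (toC p) (toC r) = ((dotR p r : ℝ) : ℂ) := by
  simp [dotC, dotR, toC, Fin.sum_univ_three]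

lemma dotC_smul_add' (x y : ℂ) (v w r : C3) :
    dotC (x • v + y • w) r = x * dotC v r + y * dotC w r := by
  simp [dotC, Fin.sum_univ_three]; ring

lemma dotC_expand' (x y : ℂ) (p q r : V3) :
    dotC (x • toC p + y • toC q) (toC r) =
      x * ((dotR p r : ℝ) : ℂ) + y * ((dotR q r : ℝ) : ℂ) := by
  simp [dotC, dotR, toC, Fin.sum_univ_three]; ring

lemma dotR_epar_right' (e n m : V3) :
    dotR (ePar e n) m = (norm3 n)⁻¹ * dotR (crossR n m) e := by
  simp [ePar, crossR, dotR, Fin.sum_univ_three]; ring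

lemma dotR_epar_epar' (e n m : V3) :
    dotR (ePar e n) (ePar e m) =
      (norm3 n)⁻¹ * ((norm3 m)⁻¹ * (dotR e e * dotR n m - dotR e n * dotR e m)) := by
  simp [ePar, crossR, dotR, Fin.sum_univ_three]; ring

lemma dotR_epar_e' (e n : V3) : dotR (ePar e n) e = 0 := by
  simp [ePar, crossR, dotR, Fin.sum_univ_three]; ring

lemma dotR_e_epar' (e n : V3) : dotR e (ePar e n) = 0 := by
  simp [ePar, crossR, dotR, Fin.sum_univ_three]; ring

lemma cross_epar' (e n m : V3) :
    dotR (crossR n (ePar e m)) e =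
      (norm3 m)⁻¹ * (dotR e e * dotR n m - dotR e m * dotR e n) := by
  simp [ePar, crossR, dotR, Fin.sum_univ_three]; ring

lemma cross_e' (n e : V3) : dotR (crossR n e) e = 0 := by
  simp [crossR, dotR, Fin.sum_univ_three]; ring

lemma cross_swap' (n m e : V3) : dotR (crossR m n) e = -dotR (crossR n m) e := by
  simp [crossR, dotR, Fin.sum_univ_three]; ring

lemma cross_add' (n m e : V3) : dotR (crossR n (n + m)) e = dotR (crossR n m) e := by
  simp [crossR, dotR, Fin.sum_univ_three]; ring

lemma dotR_add_right' (u v w : V3) : dotR u (v + w) = dotR u v + dotR u w := by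
  simp [dotR, Fin.sum_univ_three]; ring

lemma norm3_sq' (v : V3) : norm3 v * norm3 v = dotR v v := by
  refine Real.mul_self_sqrt ?_
  have : ∀ i ∈ Finset.univ, (0:ℝ) ≤ v i * v i := fun i _ => mul_self_nonneg _
  exact Finset.sum_nonneg this

lemma norm3_pos' (v : V3) (hv : v ≠ 0) : 0 < norm3 v := by
  apply Real.sqrt_pos.mpr
  obtain ⟨i, hi⟩ : ∃ i, v i ≠ 0 := by
    by_contra h; push_neg at h; exact hv (funext h)
  refine Finset.sum_pos' (fun j _ => mul_self_nonneg _) ⟨i, Finset.mem_univ i, ?_⟩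
  exact mul_self_pos.mpr hi

end Helpers

/-- Explicit formula for the components of the nonlinear interaction
`(u₁ · n₂)u₂ + (u₂ · n₁)u₁` along `e∥(n₁+n₂)` and along `e⊥`. -/

theorem two_mode_interaction_components
    (n₁ n₂ ePerp : V3) (u₁ u₂ : C3)
    (hind : LinearIndependent ℝ ![n₁, n₂])
    (hsum : n₁ + n₂ ≠ 0)
    (hunit : norm3 ePerp = 1)
    (hp1 : dotR ePerp n₁ = 0) (hp2 : dotR ePerp n₂ = 0)
    (u₁par u₁perp u₂par u₂perp : ℂ)
    (hu₁ : u₁ = u₁par • toC (ePar ePerp n₁) + u₁perp • toC ePerp)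
    (hu₂ : u₂ = u₂par • toC (ePar ePerp n₂) + u₂perp • toC ePerp)
    (ho₁ : dotC u₁ (toC n₁) = 0) (ho₂ : dotC u₂ (toC n₂) = 0) :
    dotC (dotC u₁ (toC n₂) • u₂ + dotC u₂ (toC n₁) • u₁) (toC (ePar ePerp (n₁ + n₂)))
      = u₁par * u₂par *
        ((dotR (crossR n₁ n₂) ePerp / (norm3 n₁ * norm3 n₂ * norm3 (n₁ + n₂))
            * (norm3 n₂ ^ 2 - norm3 n₁ ^ 2) : ℝ) : ℂ) ∧
    dotC (dotC u₁ (toC n₂) • u₂ + dotC u₂ (toC n₁) • u₁) (toC ePerp)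
      = ((dotR (crossR n₁ n₂) ePerp / (norm3 n₁ * norm3 n₂) : ℝ) : ℂ) *
        (u₁par * u₂perp * ((norm3 n₂ : ℝ) : ℂ) - u₂par * u₁perp * ((norm3 n₁ : ℝ) : ℂ)) := by
  have hn₁ : n₁ ≠ 0 := by simpa using hind.ne_zero 0
  have hn₂ : n₂ ≠ 0 := by simpa using hind.ne_zero 1
  have hA : (0:ℝ) < norm3 n₁ := norm3_pos' _ hn₁
  have hB : (0:ℝ) < norm3 n₂ := norm3_pos' _ hn₂
  have hC : (0:ℝ) < norm3 (n₁ + n₂) := norm3_pos' _ hsum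
  have hee : dotR ePerp ePerp = 1 := by
    have h := norm3_sq' ePerp; rw [hunit] at h; linarith
  have hsq1 := norm3_sq' n₁
  have hsq2 := norm3_sq' n₂
  subst hu₁ hu₂
  simp only [dotC_smul_add', dotC_toC', dotR_epar_right', dotR_epar_epar',
    dotR_epar_e', dotR_e_epar', dotR_add_right', cross_add',
    cross_swap' n₁ n₂ ePerp, hp1, hp2, hee, dotR_comm' n₂ n₁]
  simp only [cross_epar', cross_e', dotR_add_right', hp1, hp2, hee, dotR_comm' n₂ n₁,
    ← hsq1, ← hsq2]
  have hA' : ((norm3 n₁ : ℝ) : ℂ) ≠ 0 := Complex.ofReal_ne_zero.mpr hA.ne'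
  have hB' : ((norm3 n₂ : ℝ) : ℂ) ≠ 0 := Complex.ofReal_ne_zero.mpr hB.ne'
  have hC' : ((norm3 (n₁ + n₂) : ℝ) : ℂ) ≠ 0 := Complex.ofReal_ne_zero.mpr hC.ne'
  constructor
  · push_cast
    field_simp
    ring
  · push_cast
    field_simp
    ring
end
end

section
/- Let n ∈ ℝ³ be nonzero and b ∈ ℂ³ \ {0}. Then b is an eigenvector of the operator v ↦ i(n × v) on ℂ³ with eigenvalue +|n| if and only if: Re b · n = 0, Im b · n = 0, Re b · Im b = 0, |Re b| = |Im b|, and the triple (n, Re b, Im b) is a positively oriented (right-handed) system, i.e., (n × Re b) · Im b > 0. -/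
open scoped Classical

noncomputable section

set_option maxHeartbeats 1600000 in
/-- Characterization of positive Beltrami vectors: `b` is an eigenvector of
`v ↦ i (n × v)` with eigenvalue `+|n|` iff `Re b, Im b ⊥ n`, `Re b ⊥ Im b`, `|Re b| = |Im b|`,
and `(n, Re b, Im b)` is a right-handed system. -/
theorem positive_beltrami_vector_characterization
    (n : V3) (b : C3) (hn : n ≠ 0) (hb : b ≠ 0) :
    Complex.I • crossC (toC n) b = ((norm3 n : ℝ) : ℂ) • b ↔
      (dotR (reV b) n = 0 ∧ dotR (imV b) n = 0 ∧ dotR (reV b) (imV b) = 0 ∧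
        norm3 (reV b) = norm3 (imV b) ∧ 0 < dotR (crossR n (reV b)) (imV b)) := by
  set r := reV b with hr
  set s := imV b with hs
  set N := norm3 n with hN
  have hdotnn : dotR n n = n 0 * n 0 + n 1 * n 1 + n 2 * n 2 := by
    simp [dotR, Fin.sum_univ_three]
  have hpos : 0 < dotR n n := by
    rcases Function.ne_iff.mp hn with ⟨i, hi⟩
    rw [hdotnn]
    fin_cases i
    · nlinarith [mul_self_pos.mpr (show n 0 ≠ 0 from fun hq => hi (by simpa using hq)),
        mul_self_nonneg (n 1), mul_self_nonneg (n 2)]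
    · nlinarith [mul_self_pos.mpr (show n 1 ≠ 0 from fun hq => hi (by simpa using hq)),
        mul_self_nonneg (n 0), mul_self_nonneg (n 2)]
    · nlinarith [mul_self_pos.mpr (show n 2 ≠ 0 from fun hq => hi (by simpa using hq)),
        mul_self_nonneg (n 0), mul_self_nonneg (n 1)]
  have hNpos : 0 < N := Real.sqrt_pos.mpr hpos
  have hN2 : N * N = n 0 * n 0 + n 1 * n 1 + n 2 * n 2 := by
    rw [hN, norm3, Real.mul_self_sqrt hpos.le, hdotnn]
  have key : (Complex.I • crossC (toC n) b = ((N : ℝ) : ℂ) • b) ↔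
      (∀ i, crossR n r i = N * s i ∧ crossR n s i = -(N * r i)) := by
    rw [funext_iff]
    apply forall_congr'
    intro i
    rw [Pi.smul_apply, Pi.smul_apply, Complex.ext_iff]
    fin_cases i <;>
      simp [crossC, crossR, toC, hr, hs, reV, imV, Complex.ext_iff, Complex.mul_re,
        Complex.mul_im] <;>
      constructor <;> rintro ⟨h1, h2⟩ <;> constructor <;> linarith
  rw [key]
  constructor
  · rintro k
    have e1 : n 1 * r 2 - n 2 * r 1 = N * s 0 := by simpa [crossR] using (k 0).1
    have e2 : n 2 * r 0 - n 0 * r 2 = N * s 1 := by simpa [crossR] using (k 1).1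
    have e3 : n 0 * r 1 - n 1 * r 0 = N * s 2 := by simpa [crossR] using (k 2).1
    have f1 : n 1 * s 2 - n 2 * s 1 = -(N * r 0) := by simpa [crossR] using (k 0).2
    have f2 : n 2 * s 0 - n 0 * s 2 = -(N * r 1) := by simpa [crossR] using (k 1).2
    have f3 : n 0 * s 1 - n 1 * s 0 = -(N * r 2) := by simpa [crossR] using (k 2).2
    have hrn : dotR r n = 0 := by
      have h1 : N * dotR r n = 0 := by
        simp only [dotR, Fin.sum_univ_three]
        linear_combination (n 0) * f1 + (n 1) * f2 + (n 2) * f3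
      exact (mul_eq_zero.mp h1).resolve_left hNpos.ne'
    have hsn : dotR s n = 0 := by
      have h1 : N * dotR s n = 0 := by
        simp only [dotR, Fin.sum_univ_three]
        linear_combination (-(n 0)) * e1 - (n 1) * e2 - (n 2) * e3
      exact (mul_eq_zero.mp h1).resolve_left hNpos.ne'
    have hrs : dotR r s = 0 := by
      have h1 : N * dotR r s = 0 := by
        simp only [dotR, Fin.sum_univ_three]
        linear_combination (-(r 0)) * e1 - (r 1) * e2 - (r 2) * e3
      exact (mul_eq_zero.mp h1).resolve_left hNpos.ne'
    have hrn' : r 0 * n 0 + r 1 * n 1 + r 2 * n 2 = 0 := by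
      simpa [dotR, Fin.sum_univ_three] using hrn
    have hdot : dotR s s = dotR r r := by
      have h4 : (N * N) * dotR s s = (N * N) * dotR r r := by
        simp only [dotR, Fin.sum_univ_three]
        linear_combination (-(r 0 * r 0 + r 1 * r 1 + r 2 * r 2)) * hN2
          - (n 0 * r 0 + n 1 * r 1 + n 2 * r 2) * hrn'
          - ((n 1 * r 2 - n 2 * r 1) + N * s 0) * e1
          - ((n 2 * r 0 - n 0 * r 2) + N * s 1) * e2
          - ((n 0 * r 1 - n 1 * r 0) + N * s 2) * e3
      exact mul_left_cancel₀ (by positivity) h4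
    have hspos : 0 < dotR s s := by
      rcases Function.ne_iff.mp hb with ⟨i, hi⟩
      simp only [dotR, Fin.sum_univ_three] at hdot ⊢
      have key2 : ∀ j : Fin 3, b j ≠ 0 → 0 < r j * r j + s j * s j := by
        intro j hj
        rcases em (r j = 0) with h' | h'
        · rcases em (s j = 0) with h'' | h''
          · exact absurd (Complex.ext (by simpa [hr, reV] using h')
              (by simpa [hs, imV] using h'')) hj
          · nlinarith [mul_self_pos.mpr h'', mul_self_nonneg (r j)]
        · nlinarith [mul_self_pos.mpr h', mul_self_nonneg (s j)]
      fin_cases i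
      · have h0 := key2 0 (by exact hi)
        nlinarith [mul_self_nonneg (s 1), mul_self_nonneg (s 2), mul_self_nonneg (r 1),
          mul_self_nonneg (r 2)]
      · have h0 := key2 1 (by exact hi)
        nlinarith [mul_self_nonneg (s 0), mul_self_nonneg (s 2), mul_self_nonneg (r 0),
          mul_self_nonneg (r 2)]
      · have h0 := key2 2 (by exact hi)
        nlinarith [mul_self_nonneg (s 0), mul_self_nonneg (s 1), mul_self_nonneg (r 0),
          mul_self_nonneg (r 1)]
    refine ⟨hrn, hsn, hrs, ?_, ?_⟩
    · show Real.sqrt (dotR r r) = Real.sqrt (dotR s s)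
      rw [hdot]
    · have hT : dotR (crossR n r) s = N * dotR s s := by
        simp only [dotR, crossR, Fin.sum_univ_three, Matrix.cons_val_zero, Matrix.cons_val_one,
          Matrix.head_cons, Matrix.cons_val_two, Matrix.tail_cons]
        linear_combination (s 0) * e1 + (s 1) * e2 + (s 2) * e3
      rw [hT]
      exact mul_pos hNpos hspos
  · rintro ⟨hrn, hsn, hrs, hnorm, hor⟩
    have dnn : ∀ v : V3, 0 ≤ dotR v v := fun v =>
      Finset.sum_nonneg fun i _ => mul_self_nonneg _
    have hrr : dotR r r = dotR s s := by
      have h2 := congrArg (fun x => x * x) hnorm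
      simpa [norm3, Real.mul_self_sqrt (dnn r), Real.mul_self_sqrt (dnn s)] using h2
    have hrn' : r 0 * n 0 + r 1 * n 1 + r 2 * n 2 = 0 := by
      simpa [dotR, Fin.sum_univ_three] using hrn
    have hsn' : s 0 * n 0 + s 1 * n 1 + s 2 * n 2 = 0 := by
      simpa [dotR, Fin.sum_univ_three] using hsn
    have hrs' : r 0 * s 0 + r 1 * s 1 + r 2 * s 2 = 0 := by
      simpa [dotR, Fin.sum_univ_three] using hrs
    have hrr' : r 0 * r 0 + r 1 * r 1 + r 2 * r 2 = s 0 * s 0 + s 1 * s 1 + s 2 * s 2 := by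
      simpa [dotR, Fin.sum_univ_three] using hrr
    set T := (n 1 * r 2 - n 2 * r 1) * s 0 + (n 2 * r 0 - n 0 * r 2) * s 1
      + (n 0 * r 1 - n 1 * r 0) * s 2 with hTdef
    set S := s 0 * s 0 + s 1 * s 1 + s 2 * s 2 with hSdef
    have hor' : 0 < T := by
      simpa [dotR, crossR, Fin.sum_univ_three, hTdef] using hor
    have hSnn : 0 ≤ S := by
      rw [hSdef]
      nlinarith [mul_self_nonneg (s 0), mul_self_nonneg (s 1), mul_self_nonneg (s 2)]
    have hsq : (T - N * S) * (T + N * S) = 0 := by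
      rw [hTdef, hSdef]
      linear_combination ((n 0 * n 0 + n 1 * n 1 + n 2 * n 2) * (s 0 * s 0 + s 1 * s 1 + s 2 * s 2)) * hrr'
        + (2 * (r 0 * n 0 + r 1 * n 1 + r 2 * n 2) * (s 0 * n 0 + s 1 * n 1 + s 2 * n 2)
            - (n 0 * n 0 + n 1 * n 1 + n 2 * n 2) * (r 0 * s 0 + r 1 * s 1 + r 2 * s 2)) * hrs'
        - ((r 0 * r 0 + r 1 * r 1 + r 2 * r 2) * (s 0 * n 0 + s 1 * n 1 + s 2 * n 2)) * hsn'
        - ((s 0 * s 0 + s 1 * s 1 + s 2 * s 2) * (r 0 * n 0 + r 1 * n 1 + r 2 * n 2)) * hrn'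
        - ((s 0 * s 0 + s 1 * s 1 + s 2 * s 2) * (s 0 * s 0 + s 1 * s 1 + s 2 * s 2)) * hN2
    have hTNS : T = N * S := by
      rcases mul_eq_zero.mp hsq with h | h
      · linarith [sub_eq_zero.mp h]
      · nlinarith [mul_nonneg hNpos.le hSnn]
    have hw : (n 1 * r 2 - n 2 * r 1 - N * s 0) * (n 1 * r 2 - n 2 * r 1 - N * s 0)
        + (n 2 * r 0 - n 0 * r 2 - N * s 1) * (n 2 * r 0 - n 0 * r 2 - N * s 1)
        + (n 0 * r 1 - n 1 * r 0 - N * s 2) * (n 0 * r 1 - n 1 * r 0 - N * s 2) = 0 := by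
      have hT2 : T = N * S := hTNS
      rw [hTdef, hSdef] at hT2
      linear_combination (n 0 * n 0 + n 1 * n 1 + n 2 * n 2) * hrr'
        - (r 0 * n 0 + r 1 * n 1 + r 2 * n 2) * hrn'
        - 2 * N * hT2
        - (s 0 * s 0 + s 1 * s 1 + s 2 * s 2) * hN2
    have hu : (n 1 * s 2 - n 2 * s 1 + N * r 0) * (n 1 * s 2 - n 2 * s 1 + N * r 0)
        + (n 2 * s 0 - n 0 * s 2 + N * r 1) * (n 2 * s 0 - n 0 * s 2 + N * r 1)
        + (n 0 * s 1 - n 1 * s 0 + N * r 2) * (n 0 * s 1 - n 1 * s 0 + N * r 2) = 0 := by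
      have hT2 : T = N * S := hTNS
      rw [hTdef, hSdef] at hT2
      linear_combination (N * N) * hrr'
        - (s 0 * n 0 + s 1 * n 1 + s 2 * n 2) * hsn'
        - 2 * N * hT2
        - (s 0 * s 0 + s 1 * s 1 + s 2 * s 2) * hN2
    have w0 : n 1 * r 2 - n 2 * r 1 - N * s 0 = 0 := by
      apply mul_self_eq_zero.mp
      linarith only [hw, mul_self_nonneg (n 2 * r 0 - n 0 * r 2 - N * s 1),
        mul_self_nonneg (n 0 * r 1 - n 1 * r 0 - N * s 2),
        mul_self_nonneg (n 1 * r 2 - n 2 * r 1 - N * s 0)]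
    have w1 : n 2 * r 0 - n 0 * r 2 - N * s 1 = 0 := by
      apply mul_self_eq_zero.mp
      linarith only [hw, mul_self_nonneg (n 1 * r 2 - n 2 * r 1 - N * s 0),
        mul_self_nonneg (n 0 * r 1 - n 1 * r 0 - N * s 2),
        mul_self_nonneg (n 2 * r 0 - n 0 * r 2 - N * s 1)]
    have w2 : n 0 * r 1 - n 1 * r 0 - N * s 2 = 0 := by
      apply mul_self_eq_zero.mp
      linarith only [hw, mul_self_nonneg (n 1 * r 2 - n 2 * r 1 - N * s 0),
        mul_self_nonneg (n 2 * r 0 - n 0 * r 2 - N * s 1),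
        mul_self_nonneg (n 0 * r 1 - n 1 * r 0 - N * s 2)]
    have u0 : n 1 * s 2 - n 2 * s 1 + N * r 0 = 0 := by
      apply mul_self_eq_zero.mp
      linarith only [hu, mul_self_nonneg (n 2 * s 0 - n 0 * s 2 + N * r 1),
        mul_self_nonneg (n 0 * s 1 - n 1 * s 0 + N * r 2),
        mul_self_nonneg (n 1 * s 2 - n 2 * s 1 + N * r 0)]
    have u1 : n 2 * s 0 - n 0 * s 2 + N * r 1 = 0 := by
      apply mul_self_eq_zero.mp
      linarith only [hu, mul_self_nonneg (n 1 * s 2 - n 2 * s 1 + N * r 0),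
        mul_self_nonneg (n 0 * s 1 - n 1 * s 0 + N * r 2),
        mul_self_nonneg (n 2 * s 0 - n 0 * s 2 + N * r 1)]
    have u2 : n 0 * s 1 - n 1 * s 0 + N * r 2 = 0 := by
      apply mul_self_eq_zero.mp
      linarith only [hu, mul_self_nonneg (n 1 * s 2 - n 2 * s 1 + N * r 0),
        mul_self_nonneg (n 2 * s 0 - n 0 * s 2 + N * r 1),
        mul_self_nonneg (n 0 * s 1 - n 1 * s 0 + N * r 2)]
    intro i
    fin_cases i <;> constructor <;> simp [crossR] <;> linarith
end
end

section
/- Let n ∈ ℝ³ be nonzero and let F : ℂ³ → ℂ³ be a rotation of ℝ³ fixing n (extended complex-linearly), with rotation angle α ∉ πℤ. Then the restriction of F to {v ∈ ℂ³ : n · v = 0} has exactly two eigenvalues e^{iα} and e^{−iα}, and the corresponding eigenspaces consist precisely of the positive and negative Beltrami vectors at n (together with 0), in some order. In particular, if u ∈ ℂ³ \ {0} satisfies n · u = 0 and F u = c u for some c ∈ ℂ, then u is either a positive or a negative Beltrami vector at n. -/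
open scoped Classical

noncomputable section

lemma toC_smul_aux (r : ℝ) (v : V3) : toC (r • v) = (r : ℂ) • toC v := by
  funext i
  simp [toC, Pi.smul_apply, smul_eq_mul]

lemma crossC_smul_left_aux (r : ℂ) (v u : C3) : crossC (r • v) u = r • crossC v u := by
  funext i
  fin_cases i <;> simp [crossC, Pi.smul_apply, smul_eq_mul] <;> ring

lemma dotC_smul_left_aux (r : ℂ) (v u : C3) : dotC (r • v) u = r * dotC v u := by
  simp [dotC, Finset.mul_sum, Pi.smul_apply, smul_eq_mul, mul_assoc]

lemma norm3_sq_aux (n : V3) : ((norm3 n : ℝ) : ℂ) ^ 2 = dotC (toC n) (toC n) := by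
  have h0 : (0:ℝ) ≤ dotR n n := by
    simp only [dotR]
    apply Finset.sum_nonneg
    intro i _
    exact mul_self_nonneg _
  have : (norm3 n) ^ 2 = dotR n n := Real.sq_sqrt h0
  rw [show ((norm3 n : ℝ) : ℂ) ^ 2 = ((norm3 n ^ 2 : ℝ) : ℂ) by push_cast; ring, this]
  simp only [dotC, dotR, toC, Fin.sum_univ_three]
  push_cast
  ring

lemma norm3_ne_zero_aux (n : V3) (hn : n ≠ 0) : norm3 n ≠ 0 := by
  have h0 : (0:ℝ) < dotR n n := by
    obtain ⟨i, hi⟩ : ∃ i, n i ≠ 0 := by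
      by_contra h
      push_neg at h
      exact hn (funext h)
    have hpos : (0:ℝ) < n i * n i := mul_self_pos.mpr hi
    simp only [dotR]
    exact Finset.sum_pos' (fun j _ => mul_self_nonneg _) ⟨i, Finset.mem_univ i, hpos⟩
  exact ne_of_gt (Real.sqrt_pos.mpr h0)

lemma axisRot_perp_aux (n : V3) (hn : norm3 n ≠ 0) (α : ℝ) (u : C3)
    (h : dotC (toC n) u = 0) :
    axisRotC ((norm3 n)⁻¹ • n) α u =
      ((Real.cos α : ℝ) : ℂ) • u +
        (((Real.sin α : ℝ) : ℂ) / ((norm3 n : ℝ) : ℂ)) • crossC (toC n) u := by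
  have hr : toC ((norm3 n)⁻¹ • n) = (((norm3 n)⁻¹ : ℝ) : ℂ) • toC n := toC_smul_aux _ _
  rw [axisRotC, rodriguesC, hr, crossC_smul_left_aux, dotC_smul_left_aux, h, mul_zero,
    mul_zero, zero_smul, add_zero, smul_smul]
  congr 1
  push_cast
  rw [div_eq_mul_inv]

lemma cross_cross_aux (n u : C3) :
    crossC n (crossC n u) = (dotC n u) • n - (dotC n n) • u := by
  funext i
  fin_cases i <;>
    simp [crossC, dotC, Fin.sum_univ_three, Pi.smul_apply, Pi.sub_apply, smul_eq_mul] <;> ring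

lemma crossC_add_smul_aux (v : C3) (a b : ℂ) (x y : C3) :
    crossC v (a • x + b • y) = a • crossC v x + b • crossC v y := by
  funext i
  fin_cases i <;>
    simp [crossC, Pi.smul_apply, Pi.add_apply, smul_eq_mul] <;> ring

/-- A rotation of `ℝ³` fixing `n` with angle `α ∉ πℤ`, restricted (after
complex-linear extension) to `{v : n · v = 0}`, has exactly the two eigenvalues `e^{iα}` and
`e^{-iα}`, whose eigenspaces are the positive and negative Beltrami vectors at `n` (with `0`),
in some order.  In particular any eigenvector perpendicular to `n` is a positive or negative
Beltrami vector. -/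
theorem rotation_eigenvectors_are_beltrami
    (n : V3) (hn : n ≠ 0) (α : ℝ) (hα : ∀ k : ℤ, α ≠ k * Real.pi) :
    ∃ ε : ℝ, (ε = 1 ∨ ε = -1) ∧
      (∀ u : C3, dotC (toC n) u = 0 →
        ((axisRotC ((norm3 n)⁻¹ • n) α u = Complex.exp (α * Complex.I) • u ↔
            Complex.I • crossC (toC n) u = ((ε * norm3 n : ℝ) : ℂ) • u) ∧
         (axisRotC ((norm3 n)⁻¹ • n) α u = Complex.exp (-α * Complex.I) • u ↔
            Complex.I • crossC (toC n) u = ((-(ε * norm3 n) : ℝ) : ℂ) • u))) ∧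
      (∀ u : C3, u ≠ 0 → dotC (toC n) u = 0 → ∀ c : ℂ,
        axisRotC ((norm3 n)⁻¹ • n) α u = c • u →
        c = Complex.exp (α * Complex.I) ∨ c = Complex.exp (-α * Complex.I)) := by
  have hN : norm3 n ≠ 0 := norm3_ne_zero_aux n hn
  have hNc : ((norm3 n : ℝ) : ℂ) ≠ 0 := by exact_mod_cast hN
  have hs : Real.sin α ≠ 0 := by
    intro h
    obtain ⟨k, hk⟩ := Real.sin_eq_zero_iff.mp h
    exact hα k hk.symm
  have hsc : ((Real.sin α : ℝ) : ℂ) ≠ 0 := by exact_mod_cast hs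
  have hsc' : Complex.sin (α : ℂ) ≠ 0 := by rw [← Complex.ofReal_sin]; exact hsc
  have hexp : Complex.exp (α * Complex.I) =
      ((Real.cos α : ℝ) : ℂ) + ((Real.sin α : ℝ) : ℂ) * Complex.I := by
    rw [Complex.exp_mul_I, ← Complex.ofReal_cos, ← Complex.ofReal_sin]
  have hexp' : Complex.exp (-α * Complex.I) =
      ((Real.cos α : ℝ) : ℂ) - ((Real.sin α : ℝ) : ℂ) * Complex.I := by
    rw [show (-(α:ℂ)) = ((-α : ℝ) : ℂ) by push_cast; ring, Complex.exp_mul_I,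
      ← Complex.ofReal_cos, ← Complex.ofReal_sin, Real.cos_neg, Real.sin_neg]
    push_cast
    ring
  refine ⟨-1, Or.inr rfl, ?_, ?_⟩
  · intro u h
    have hA := axisRot_perp_aux n hN α u h
    constructor
    · rw [hA, hexp, show ((-1 * norm3 n : ℝ) : ℂ) = -((norm3 n : ℝ) : ℂ) by push_cast; ring,
        funext_iff, funext_iff]
      refine forall_congr' fun i => ?_
      simp only [Pi.add_apply, Pi.smul_apply, smul_eq_mul, Pi.neg_apply, neg_mul]
      constructor
      · intro hh
        linear_combination (norm := (try field_simp; try ring_nf; try simp only [Complex.I_sq, Complex.I_mul_I]; try ring1))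
          (Complex.I * ((norm3 n : ℝ) : ℂ) / ((Real.sin α : ℝ) : ℂ)) * hh
      · intro hh
        linear_combination (norm := (try field_simp; try ring_nf; try simp only [Complex.I_sq, Complex.I_mul_I]; try ring1))
          (-Complex.I * ((Real.sin α : ℝ) : ℂ) / ((norm3 n : ℝ) : ℂ)) * hh
    · rw [hA, hexp', show ((-(-1 * norm3 n) : ℝ) : ℂ) = ((norm3 n : ℝ) : ℂ) by push_cast; ring,
        funext_iff, funext_iff]
      refine forall_congr' fun i => ?_
      simp only [Pi.add_apply, Pi.smul_apply, smul_eq_mul]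
      constructor
      · intro hh
        linear_combination (norm := (try field_simp; try ring_nf; try simp only [Complex.I_sq, Complex.I_mul_I]; try ring1))
          (Complex.I * ((norm3 n : ℝ) : ℂ) / ((Real.sin α : ℝ) : ℂ)) * hh
      · intro hh
        linear_combination (norm := (try field_simp; try ring_nf; try simp only [Complex.I_sq, Complex.I_mul_I]; try ring1))
          (-Complex.I * ((Real.sin α : ℝ) : ℂ) / ((norm3 n : ℝ) : ℂ)) * hh
  · intro u hu h c hF
    have hA := axisRot_perp_aux n hN α u h
    rw [hA] at hF
    -- apply crossC (toC n) to both sides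
    have hF2 : crossC (toC n) (((Real.cos α : ℝ) : ℂ) • u +
        (((Real.sin α : ℝ) : ℂ) / ((norm3 n : ℝ) : ℂ)) • crossC (toC n) u)
        = crossC (toC n) (c • u) := by rw [hF]
    rw [crossC_add_smul_aux, cross_cross_aux, h, zero_smul, zero_sub,
      show (c • u : C3) = c • u + (0:ℂ) • u by simp, crossC_add_smul_aux] at hF2
    simp only [zero_smul, add_zero] at hF2
    rw [← norm3_sq_aux] at hF2
    obtain ⟨i, hi⟩ : ∃ i, u i ≠ 0 := by
      by_contra hh
      push_neg at hh
      exact hu (funext hh)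
    have e1 := congrFun hF i
    have e2 := congrFun hF2 i
    simp only [Pi.add_apply, Pi.smul_apply, Pi.neg_apply, smul_eq_mul] at e1 e2
    set A := ((Real.cos α : ℝ) : ℂ)
    set S := ((Real.sin α : ℝ) : ℂ)
    set N := ((norm3 n : ℝ) : ℂ)
    set x := u i
    set l := crossC (toC n) u i
    have key : ((c - A) ^ 2 + S ^ 2) * x = 0 := by
      linear_combination (norm := (try field_simp; try ring_nf; try simp only [Complex.I_sq, Complex.I_mul_I]; try ring1)) (A - c) * e1 + (-(S / N)) * e2
    have key2 : (c - A) ^ 2 + S ^ 2 = 0 := (mul_eq_zero.mp key).resolve_right hi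
    have hfac : (c - (A + S * Complex.I)) * (c - (A - S * Complex.I)) = 0 := by
      linear_combination key2 - (S ^ 2) * Complex.I_sq
    rcases mul_eq_zero.mp hfac with h1 | h1
    · left
      rw [hexp]
      linear_combination h1
    · right
      rw [hexp']
      linear_combination h1
end
end

section
/- (2D mode interaction) Let n₁, n₂ ∈ ℝ² be nonzero and let u₁ = α₁ n₁⊥/|n₁|, u₂ = α₂ n₂⊥/|n₂| with α₁, α₂ ∈ ℂ \ {0}, where (a,b)⊥ = (−b,a). Then the projection of (u₁ · n₂)u₂ + (u₂ · n₁)u₁ onto the line perpendicular to n₁ + n₂ vanishes if and only if n₁ and n₂ are parallel or |n₁| = |n₂|. -/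
open scoped Classical

noncomputable section

abbrev V2 := Fin 2 → ℝ
abbrev C2 := Fin 2 → ℂ

def toC2 (v : V2) : C2 := fun i => (v i : ℂ)
def dotR2 (u v : V2) : ℝ := ∑ i, u i * v i
def dotC2 (u v : C2) : ℂ := ∑ i, u i * v i
def norm2 (v : V2) : ℝ := Real.sqrt (dotR2 v v)
/-- `(a,b)⊥ = (−b,a)`. -/
def perp2 (n : V2) : V2 := ![-n 1, n 0]

lemma v2_ne_zero_iff (n : V2) : n ≠ 0 ↔ n 0 ≠ 0 ∨ n 1 ≠ 0 := by
  constructor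
  · intro h
    by_contra hc
    push_neg at hc
    exact h (funext fun i => by fin_cases i <;> simp [hc.1, hc.2])
  · rintro (h | h) hc <;> simp [hc] at h

lemma det_eq_zero_iff (n₁ n₂ : V2) (hn₂ : n₂ ≠ 0) :
    ¬ LinearIndependent ℝ ![n₁, n₂] ↔ n₁ 0 * n₂ 1 - n₁ 1 * n₂ 0 = 0 := by
  rw [LinearIndependent.pair_iff]
  constructor
  · intro h
    by_contra hd
    apply h
    intro s t hst
    have h0 : s * n₁ 0 + t * n₂ 0 = 0 := congrFun hst 0
    have h1 : s * n₁ 1 + t * n₂ 1 = 0 := congrFun hst 1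
    have hs : s * (n₁ 0 * n₂ 1 - n₁ 1 * n₂ 0) = 0 := by linear_combination n₂ 1 * h0 - n₂ 0 * h1
    have ht : t * (n₁ 0 * n₂ 1 - n₁ 1 * n₂ 0) = 0 := by linear_combination n₁ 0 * h1 - n₁ 1 * h0
    exact ⟨by rcases mul_eq_zero.1 hs with h | h; exact h; exact absurd h hd,
           by rcases mul_eq_zero.1 ht with h | h; exact h; exact absurd h hd⟩
  · intro hd h
    by_cases ha : n₁ 1 = 0 ∧ n₂ 1 = 0
    · have hb0 : n₂ 0 ≠ 0 := by
        rcases (v2_ne_zero_iff n₂).1 hn₂ with h' | h'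
        · exact h'
        · exact absurd ha.2 h'
      have := (h (n₂ 0) (-(n₁ 0)) (funext fun i => by
        fin_cases i <;> simp [ha.1, ha.2] <;> ring)).1
      exact hb0 this
    · have := h (n₂ 1) (-(n₁ 1)) (funext fun i => by
        fin_cases i <;> simp <;> [skip; ring] <;> linarith [hd])
      push_neg at ha
      rcases this with ⟨hb1, ha1⟩
      have ha1' : n₁ 1 = 0 := by linarith [neg_eq_zero.1 ha1]
      exact (ha ha1') hb1

/-- 2D mode interaction: for divergence-free modes `u_j = α_j n_j⊥/|n_j|`,
the projection of the nonlinear output onto the line perpendicular to `n₁+n₂` vanishes iff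
`n₁ ∥ n₂` or `|n₁| = |n₂|`. -/
theorem two_mode_interaction_2d
    (n₁ n₂ : V2) (hn₁ : n₁ ≠ 0) (hn₂ : n₂ ≠ 0) (hsum : n₁ + n₂ ≠ 0)
    (α₁ α₂ : ℂ) (hα₁ : α₁ ≠ 0) (hα₂ : α₂ ≠ 0) :
    let u₁ : C2 := α₁ • toC2 ((norm2 n₁)⁻¹ • perp2 n₁)
    let u₂ : C2 := α₂ • toC2 ((norm2 n₂)⁻¹ • perp2 n₂)
    (dotC2 (toC2 (perp2 (n₁ + n₂))) (dotC2 u₁ (toC2 n₂) • u₂ + dotC2 u₂ (toC2 n₁) • u₁) = 0 ↔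
      (¬ LinearIndependent ℝ ![n₁, n₂]) ∨ norm2 n₁ = norm2 n₂) := by
  intro u₁ u₂
  have hSa : 0 < dotR2 n₁ n₁ := by
    rcases (v2_ne_zero_iff n₁).1 hn₁ with h | h <;>
      · simp only [dotR2, Fin.sum_univ_two]
        nlinarith [mul_self_nonneg (n₁ 0), mul_self_nonneg (n₁ 1), mul_self_pos.2 h]
  have hSb : 0 < dotR2 n₂ n₂ := by
    rcases (v2_ne_zero_iff n₂).1 hn₂ with h | h <;>
      · simp only [dotR2, Fin.sum_univ_two]
        nlinarith [mul_self_nonneg (n₂ 0), mul_self_nonneg (n₂ 1), mul_self_pos.2 h]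
  have hA : (0:ℝ) < norm2 n₁ := Real.sqrt_pos.2 hSa
  have hB : (0:ℝ) < norm2 n₂ := Real.sqrt_pos.2 hSb
  set A := norm2 n₁ with hAdef
  set B := norm2 n₂ with hBdef
  set d : ℝ := n₁ 0 * n₂ 1 - n₁ 1 * n₂ 0 with hd
  have key : dotC2 (toC2 (perp2 (n₁ + n₂)))
      (dotC2 u₁ (toC2 n₂) • u₂ + dotC2 u₂ (toC2 n₁) • u₁) =
      α₁ * α₂ * ((A⁻¹ * B⁻¹ : ℝ) : ℂ) *
        ((d * (n₂ 0 * n₂ 0 + n₂ 1 * n₂ 1 - n₁ 0 * n₁ 0 - n₁ 1 * n₁ 1) : ℝ) : ℂ) := by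
    simp only [u₁, u₂, dotC2, toC2, perp2, dotR2, Fin.sum_univ_two, Pi.smul_apply,
      Pi.add_apply, Matrix.cons_val_zero, Matrix.cons_val_one, Matrix.head_cons, smul_eq_mul,
      hd]
    push_cast
    ring
  rw [key]
  have hSa' : dotR2 n₁ n₁ = n₁ 0 * n₁ 0 + n₁ 1 * n₁ 1 := by
    simp [dotR2, Fin.sum_univ_two]
  have hSb' : dotR2 n₂ n₂ = n₂ 0 * n₂ 0 + n₂ 1 * n₂ 1 := by
    simp [dotR2, Fin.sum_univ_two]
  have hAB : ((A⁻¹ * B⁻¹ : ℝ) : ℂ) ≠ 0 := by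
    simp [Complex.ofReal_ne_zero]
    exact ⟨ne_of_gt hA, ne_of_gt hB⟩
  constructor
  · intro h
    have h' : ((d * (n₂ 0 * n₂ 0 + n₂ 1 * n₂ 1 - n₁ 0 * n₁ 0 - n₁ 1 * n₁ 1) : ℝ) : ℂ) = 0 := by
      rcases mul_eq_zero.1 h with h | h
      · rcases mul_eq_zero.1 h with h | h
        · rcases mul_eq_zero.1 h with h | h
          · exact absurd h hα₁
          · exact absurd h hα₂
        · exact absurd h hAB
      · exact h
    have h'' : d * (n₂ 0 * n₂ 0 + n₂ 1 * n₂ 1 - n₁ 0 * n₁ 0 - n₁ 1 * n₁ 1) = 0 := by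
      exact_mod_cast h'
    rcases mul_eq_zero.1 h'' with h | h
    · exact Or.inl ((det_eq_zero_iff n₁ n₂ hn₂).2 (by rw [← hd]; exact h))
    · right
      rw [hAdef, hBdef]
      unfold norm2
      congr 1
      rw [hSa', hSb']
      linarith
  · intro h
    have hz : d * (n₂ 0 * n₂ 0 + n₂ 1 * n₂ 1 - n₁ 0 * n₁ 0 - n₁ 1 * n₁ 1) = 0 := by
      rcases h with h | h
      · have h0 := (det_eq_zero_iff n₁ n₂ hn₂).1 h
        rw [hd, h0]
        ring
      · have h2 : dotR2 n₁ n₁ = dotR2 n₂ n₂ := by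
          rw [hAdef, hBdef] at h
          unfold norm2 at h
          exact (Real.sqrt_inj hSa.le hSb.le).1 h
        rw [hSa', hSb'] at h2
        rw [hd]
        linear_combination (n₁ 1 * n₂ 0 - n₁ 0 * n₂ 1) * h2
    rw [hz]
    simp
end
end

section
/- Let P be a plane through the origin in ℝ³ with unit normal e⊥, let λ > 0, and let n₀, …, n_{p−1} be points of P with |nⱼ| = λ for all j. Let u∥(x) = Σⱼ αⱼ (e⊥ × (nⱼ/λ)) e^{i nⱼ·x} with αⱼ ∈ ℂ, and suppose u∥ is real-valued. Then (u∥ · ∇)u∥ is a gradient field; more precisely, for every n in the Fourier support of the nonlinearity, the projection P_n of the corresponding Fourier coefficient of (u∥·∇)u∥ onto {v : n · v = 0} vanishes. Consequently u∥ is a stationary solution of the incompressible Euler equations. -/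
open scoped Classical

noncomputable section

lemma aux_key (m e d : V3) (he : dotR m e = 0) (hd : dotR m d = 0) (k : Fin 3) :
    dotR m m * crossR e d k = dotR m (crossR e d) * m k := by
  simp only [dotR, crossR, Fin.sum_univ_three] at he hd ⊢
  fin_cases k <;> simp
  · linear_combination (m 1 * d 2 - m 2 * d 1) * he - (m 1 * e 2 - m 2 * e 1) * hd
  · linear_combination (m 2 * d 0 - m 0 * d 2) * he - (m 2 * e 0 - m 0 * e 2) * hd
  · linear_combination (m 0 * d 1 - m 1 * d 0) * he - (m 0 * e 1 - m 1 * e 0) * hd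

lemma aux_dot_ne (m : V3) (hm : m ≠ 0) : dotR m m ≠ 0 := by
  simp only [dotR, Fin.sum_univ_three]
  intro h
  apply hm
  have h0 : m 0 = 0 := by nlinarith [sq_nonneg (m 0), sq_nonneg (m 1), sq_nonneg (m 2)]
  have h1 : m 1 = 0 := by nlinarith [sq_nonneg (m 0), sq_nonneg (m 1), sq_nonneg (m 2)]
  have h2 : m 2 = 0 := by nlinarith [sq_nonneg (m 0), sq_nonneg (m 1), sq_nonneg (m 2)]
  funext i; fin_cases i <;> simpa

lemma aux_cross_smul (e : V3) (r : ℝ) (v : V3) :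
    crossR e (r • v) = r • crossR e v := by
  funext k; fin_cases k <;> · simp [crossR]; ring

lemma aux_cross_sub (e a b : V3) :
    crossR e (b - a) = crossR e b - crossR e a := by
  funext k; fin_cases k <;> · simp [crossR]; ring

lemma aux_antisym (e a b : V3) :
    dotR (crossR e b) a = -dotR (crossR e a) b := by
  simp only [dotR, crossR, Fin.sum_univ_three]
  simp; ring

lemma aux_dotC_toC (u v : V3) : dotC (toC u) (toC v) = ((dotR u v : ℝ) : ℂ) := by
  simp only [dotC, toC, dotR, Fin.sum_univ_three]
  push_cast; ring

lemma aux_h1 (e a b : V3) (A : ℂ) (r : ℝ) :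
    dotC (A • toC (crossR e (r • a))) (toC b) =
      A * (r : ℂ) * ((dotR (crossR e a) b : ℝ) : ℂ) := by
  rw [aux_cross_smul]
  simp only [dotC, toC, dotR, Fin.sum_univ_three, Pi.smul_apply, smul_eq_mul]
  push_cast; ring

lemma aux_repr (e a b : V3) (A B : ℂ) (r : ℝ) :
    dotC (A • toC (crossR e (r • a))) (toC b) • (B • toC (crossR e (r • b)))
      + dotC (B • toC (crossR e (r • b))) (toC a) • (A • toC (crossR e (r • a)))
    = (A * B * (r : ℂ) * (r : ℂ) * ((dotR (crossR e a) b : ℝ) : ℂ)) •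
        toC (crossR e (b - a)) := by
  have h2c : ((dotR (crossR e b) a : ℝ) : ℂ) = -((dotR (crossR e a) b : ℝ) : ℂ) := by
    exact_mod_cast congrArg (fun x : ℝ => (x : ℂ)) (aux_antisym e a b)
  rw [aux_h1 e a b A r, aux_h1 e b a B r, h2c, aux_cross_sub, aux_cross_smul, aux_cross_smul]
  funext k
  simp only [toC, Pi.smul_apply, Pi.add_apply, Pi.sub_apply, smul_eq_mul]
  push_cast; ring

lemma aux_proj_zero (m v : V3) (hmm : dotR m m ≠ 0)
    (hkey : ∀ k, dotR m m * v k = dotR m v * m k) : projC m (toC v) = 0 := by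
  funext k
  simp only [projC, Pi.sub_apply, Pi.smul_apply, smul_eq_mul, Pi.zero_apply, aux_dotC_toC]
  rw [sub_eq_zero, div_mul_eq_mul_div, eq_div_iff (by exact_mod_cast hmm)]
  show (v k : ℂ) * ((dotR m m : ℝ) : ℂ) = ((dotR m v : ℝ) : ℂ) * (m k : ℂ)
  exact_mod_cast congrArg (fun x : ℝ => (x : ℂ)) (by linarith [hkey k])

def projL (m : V3) : C3 →ₗ[ℂ] C3 where
  toFun := projC m
  map_add' u v := by
    funext k
    simp [projC, dotC, toC, Fin.sum_univ_three, Pi.add_apply, Pi.sub_apply, Pi.smul_apply,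
      smul_eq_mul]
    ring
  map_smul' c v := by
    funext k
    simp [projC, dotC, toC, Fin.sum_univ_three, Pi.sub_apply, Pi.smul_apply, smul_eq_mul]
    ring


/-- For a real planar flow `u∥(x) = Σⱼ αⱼ (e⊥ × (nⱼ/λ)) e^{i nⱼ·x}` with all
frequencies of equal length `λ` in the plane `P ⊥ e⊥`, every Fourier coefficient of the
nonlinearity `(u∥·∇)u∥` has vanishing Helmholtz projection; hence `(u∥·∇)u∥` is a gradient
field and `u∥` is a stationary Euler flow. -/
theorem planar_equal_modes_no_interaction
    (ePerp : V3) (hunit : norm3 ePerp = 1) (lam : ℝ) (hlam : 0 < lam)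
    (p : ℕ) (n : Fin p → V3) (α : Fin p → ℂ)
    (hplane : ∀ j, dotR (n j) ePerp = 0)
    (hcirc : ∀ j, norm3 (n j) = lam)
    (hreal : ∀ x : V3, ∀ k : Fin 3,
      (∑ j, α j * Complex.exp (Complex.I * ((dotR (n j) x : ℝ) : ℂ)) *
        (((crossR ePerp (lam⁻¹ • n j)) k : ℝ) : ℂ)).im = 0) :
    ∀ m : V3, m ≠ 0 →
      projC m ((Complex.I / 2) •
        ∑ j : Fin p, ∑ l : Fin p,
          if n j + n l = m then
            dotC (α j • toC (crossR ePerp (lam⁻¹ • n j))) (toC (n l)) •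
                (α l • toC (crossR ePerp (lam⁻¹ • n l)))
              + dotC (α l • toC (crossR ePerp (lam⁻¹ • n l))) (toC (n j)) •
                (α j • toC (crossR ePerp (lam⁻¹ • n j)))
          else 0) = 0 := by
  
  intro m hm
  have hmm : dotR m m ≠ 0 := aux_dot_ne m hm
  have hsq : ∀ j, dotR (n j) (n j) = lam ^ 2 := by
    intro j
    have h1 : 0 ≤ dotR (n j) (n j) :=
      Finset.sum_nonneg fun i _ => mul_self_nonneg _
    have := Real.sq_sqrt h1
    rw [show Real.sqrt (dotR (n j) (n j)) = lam from hcirc j] at this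
    linarith
  show projL m _ = 0
  rw [map_smul, map_sum]
  have hterm : ∀ j : Fin p, projL m (∑ l : Fin p,
      if n j + n l = m then
        dotC (α j • toC (crossR ePerp (lam⁻¹ • n j))) (toC (n l)) •
            (α l • toC (crossR ePerp (lam⁻¹ • n l)))
          + dotC (α l • toC (crossR ePerp (lam⁻¹ • n l))) (toC (n j)) •
            (α j • toC (crossR ePerp (lam⁻¹ • n j)))
      else 0) = 0 := by
    intro j
    rw [map_sum]
    apply Finset.sum_eq_zero
    intro l _
    by_cases h : n j + n l = m
    · rw [if_pos h]
      have hd : dotR m (n l - n j) = 0 := by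
        have ha := hsq j
        have hb := hsq l
        simp only [dotR, Fin.sum_univ_three, Pi.sub_apply] at ha hb ⊢
        rw [← h]
        simp only [Pi.add_apply]
        ring_nf
        linarith
      have he : dotR m ePerp = 0 := by
        have hpa := hplane j
        have hpb := hplane l
        simp only [dotR, Fin.sum_univ_three] at hpa hpb ⊢
        rw [← h]
        simp only [Pi.add_apply]
        linarith
      rw [aux_repr ePerp (n j) (n l) (α j) (α l) lam⁻¹, map_smul]
      have hv : projL m (toC (crossR ePerp (n l - n j))) = 0 := by
        show projC m (toC (crossR ePerp (n l - n j))) = 0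
        exact aux_proj_zero m _ hmm fun k => aux_key m ePerp (n l - n j) he hd k
      rw [hv, smul_zero]
    · rw [if_neg h, map_zero]
  have hz : ∑ j : Fin p, projL m (∑ l : Fin p,
      if n j + n l = m then
        dotC (α j • toC (crossR ePerp (lam⁻¹ • n j))) (toC (n l)) •
            (α l • toC (crossR ePerp (lam⁻¹ • n l)))
          + dotC (α l • toC (crossR ePerp (lam⁻¹ • n l))) (toC (n j)) •
            (α j • toC (crossR ePerp (lam⁻¹ • n j)))
      else 0) = 0 := Finset.sum_eq_zero fun j _ => hterm j
  rw [hz, smul_zero]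
end
end

section
/- Let u∥(x) = Σⱼ αⱼ (e⊥ × (nⱼ/λ)) e^{i nⱼ·x} be as above (all frequencies nⱼ on a circle of radius λ in the plane P with unit normal e⊥), and let ω(x) = Σⱼ i αⱼ e^{i nⱼ·x} be the scalar function with ∇ × u∥ = λ ω e⊥. Then for every positive integer q, (u∥(x) · ∇)(ω(x)^q) = 0 for all x ∈ ℝ³. -/
open scoped Classical

noncomputable section

/-!
At a fixed point `x`, put `W = Σⱼ αⱼ e^{i nⱼ·x} nⱼ ∈ ℂ³`. By bilinearity of the cross product
`u∥(x) = λ⁻¹ e⊥ × W`, and differentiating the plane waves gives `∇ω(x) = i² W = -W`. Hence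
`(u∥ · ∇)(ω^q) = q ω^{q-1} (u∥ · ∇ω) = -q ω^{q-1} λ⁻¹ (e⊥ × W) · W = 0`, the complexified form
of the antisymmetry of the triple product.
-/

open Complex Matrix

def dotCLM (m : V3) : V3 →L[ℝ] ℝ := ∑ i, m i • ContinuousLinearMap.proj i

lemma coe_dotCLM (m : V3) : ⇑(dotCLM m) = dotR m := by
  ext v; simp [dotCLM, dotR]

lemma hasFDerivAt_dotR (m x : V3) : HasFDerivAt (dotR m) (dotCLM m) x :=
  coe_dotCLM m ▸ (dotCLM m).hasFDerivAt

lemma hasFDerivAt_cexp_I_mul_dotR (m x : V3) :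
    HasFDerivAt (fun y => cexp (I * dotR m y))
      (cexp (I * dotR m x) • I • ofRealCLM.comp (dotCLM m)) x :=
  ((ofRealCLM.hasFDerivAt.comp x (hasFDerivAt_dotR m x)).const_mul I).cexp

section WaveSum

variable {ι : Type*} [Fintype ι] (c : ι → ℂ) (m : ι → V3)

lemma hasFDerivAt_sum_mul_cexp (x : V3) :
    HasFDerivAt (fun y => ∑ j, c j * cexp (I * dotR (m j) y))
      (∑ j, c j • cexp (I * dotR (m j) x) • I • ofRealCLM.comp (dotCLM (m j))) x :=
  HasFDerivAt.fun_sum fun j _ => (hasFDerivAt_cexp_I_mul_dotR (m j) x).const_mul (c j)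

lemma pderivC_sum_mul_cexp (k : Fin 3) (x : V3) :
    pderivC (fun y => ∑ j, c j * cexp (I * dotR (m j) y)) k x
      = ∑ j, c j * cexp (I * dotR (m j) x) * (I * m j k) := by
  rw [pderivC, (hasFDerivAt_sum_mul_cexp c m x).fderiv]
  simp [coe_dotCLM, dotR, Pi.single_apply, mul_assoc]

lemma toC_crossR (u v : V3) : toC (crossR u v) = toC u ⨯₃ toC v := by
  ext i; fin_cases i <;> simp [toC, crossR, cross_apply]

lemma sum_mul_crossR_smul (a : V3) (s : ℝ) (k : Fin 3) :
    ∑ j, c j * (crossR a (s • m j) k : ℂ) = s * (toC a ⨯₃ ∑ j, c j • toC (m j)) k := by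
  have h (j : ι) : (crossR a (s • m j) k : ℂ) = s * (toC a ⨯₃ toC (m j)) k := by
    rw [← toC_crossR]
    fin_cases k <;> simp [toC, crossR] <;> ring
  simp only [map_sum, map_smul, Finset.sum_apply, Pi.smul_apply, smul_eq_mul, Finset.mul_sum, h]
  exact Finset.sum_congr rfl fun j _ => mul_left_comm _ _ _

end WaveSum

lemma pderivC_pow {f : V3 → ℂ} {x : V3} (hf : DifferentiableAt ℝ f x) (q : ℕ) (k : Fin 3) :
    pderivC (fun y => f y ^ q) k x = q * f x ^ (q - 1) * pderivC f k x := by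
  simp [pderivC, fderiv_fun_pow q hf]

theorem planar_flow_annihilates_vorticity_powers_general
    (ePerp : V3) (lam : ℝ)
    (p : ℕ) (n : Fin p → V3) (α : Fin p → ℂ) :
    ∀ q : ℕ, 0 < q → ∀ x : V3,
      ∑ k : Fin 3,
        (∑ j, α j * Complex.exp (Complex.I * ((dotR (n j) x : ℝ) : ℂ)) *
            (((crossR ePerp (lam⁻¹ • n j)) k : ℝ) : ℂ)) *
          pderivC (fun y =>
            (∑ j, Complex.I * α j * Complex.exp (Complex.I * ((dotR (n j) y : ℝ) : ℂ))) ^ q) k x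
        = 0 := by
  intro q _ x
  set ω : V3 → ℂ := fun y => ∑ j, I * α j * cexp (I * dotR (n j) y)
  set W : C3 := ∑ j, (α j * cexp (I * dotR (n j) x)) • toC (n j)
  have hgrad (k : Fin 3) : pderivC ω k x = -W k := by
    rw [pderivC_sum_mul_cexp]
    simp only [W, Finset.sum_apply, Pi.smul_apply, smul_eq_mul, toC, ← Finset.sum_neg_distrib]
    refine Finset.sum_congr rfl fun j _ => ?_
    linear_combination (α j * cexp (I * dotR (n j) x) * n j k) * I_mul_I
  have hω : DifferentiableAt ℝ ω x := (hasFDerivAt_sum_mul_cexp _ _ x).differentiableAt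
  calc _ = ∑ k, lam⁻¹ * (toC ePerp ⨯₃ W) k * (q * ω x ^ (q - 1) * -W k) := by
        refine Finset.sum_congr rfl fun k _ => ?_
        rw [sum_mul_crossR_smul (fun j => α j * cexp (I * dotR (n j) x)), pderivC_pow hω, hgrad]
    _ = -(lam⁻¹ * q * ω x ^ (q - 1)) * (W ⬝ᵥ toC ePerp ⨯₃ W) := by
        simp only [dotProduct, Finset.mul_sum]
        exact Finset.sum_congr rfl fun k _ => by ring
    _ = 0 := by rw [dot_cross_self, mul_zero]

/-- With `u∥(x) = Σⱼ αⱼ (e⊥ × (nⱼ/λ)) e^{i nⱼ·x}` and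
`ω(x) = Σⱼ i αⱼ e^{i nⱼ·x}` (so that `∇ × u∥ = λ ω e⊥`), one has `(u∥ · ∇)(ω^q) = 0` for every
positive integer `q` and every `x ∈ ℝ³`. -/
theorem planar_flow_annihilates_vorticity_powers
    (ePerp : V3) (hunit : norm3 ePerp = 1) (lam : ℝ) (hlam : 0 < lam)
    (p : ℕ) (n : Fin p → V3) (α : Fin p → ℂ)
    (hinj : Function.Injective n)
    (hplane : ∀ j, dotR (n j) ePerp = 0)
    (hcirc : ∀ j, norm3 (n j) = lam) :
    ∀ q : ℕ, 0 < q → ∀ x : V3,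
      ∑ k : Fin 3,
        (∑ j, α j * Complex.exp (Complex.I * ((dotR (n j) x : ℝ) : ℂ)) *
            (((crossR ePerp (lam⁻¹ • n j)) k : ℝ) : ℂ)) *
          pderivC (fun y =>
            (∑ j, Complex.I * α j * Complex.exp (Complex.I * ((dotR (n j) y : ℝ) : ℂ))) ^ q) k x
        = 0 :=
  planar_flow_annihilates_vorticity_powers_general ePerp lam p n α
end
end

section
/- Let u∥ be a real-valued planar flow with Fourier support on a circle of radius λ > 0 in a plane P through the origin (as in the previous statement), let ω be the scalar function with ∇ × u∥ = λ ω e⊥, and let Q be a polynomial with real coefficients. Then the vector field u(x) = u∥(x) + (Q(ω(x)) − ⟨Q(ω)⟩) e⊥, where ⟨Q(ω)⟩ is the mean (zero Fourier mode) of Q(ω), is a stationary solution of the incompressible Euler equations: (u · ∇)u is a gradient field and ∇ · u = 0. -/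
open scoped Classical

noncomputable section

/-! Every mode of `u∥` is `λ⁻¹ e⊥ × n` times a plane wave, and on the circle
`n × (e⊥ × n) = λ² e⊥`, `e⊥ × (e⊥ × n) = -n`. Hence `∇ · u∥ = 0`, `∂_{e⊥} u∥ = 0`,
`∇ × u∥ = λ ω e⊥` and `∇ω = λ e⊥ × u∥`. The last identity says that `ω`, and so the vertical
component `Q(ω) - c`, is constant along `u`; therefore `∇ · u = ∇ · u∥ = 0` and
`(u · ∇)u = (u∥ · ∇)u∥ = ∇(|u∥|²/2) + (∇ × u∥) × u∥ = ∇((|u∥|² + ω²)/2)`. -/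

open scoped Matrix

theorem crossR_eq_cross (u v : V3) : crossR u v = u ⨯₃ v := (cross_apply u v).symm

theorem dotR_eq_dotProduct (u v : V3) : dotR u v = u ⬝ᵥ v := rfl

theorem dotProduct_self_eq_sq_of_norm3_eq {v : V3} {r : ℝ} (h : norm3 v = r) :
    v ⬝ᵥ v = r ^ 2 := by
  have hnonneg : 0 ≤ dotR v v := Finset.sum_nonneg fun i _ => mul_self_nonneg (v i)
  rw [← h, norm3, Real.sq_sqrt hnonneg]
  rfl

theorem cross_cross_inv_smul_eq_smul {K : Type*} [Field K] {n e : Fin 3 → K} {r : K}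
    (hne : n ⬝ᵥ e = 0) (hn : n ⬝ᵥ n = r ^ 2) : n ⨯₃ (e ⨯₃ (r⁻¹ • n)) = r • e := by
  rw [cross_cross_eq_smul_sub_smul', dotProduct_smul, hn, smul_eq_mul, dotProduct_comm, hne,
    zero_smul, sub_zero, inv_mul_eq_div, sq, mul_self_div_self]

theorem cross_cross_eq_neg_of_dotProduct {R : Type*} [CommRing R] {e v : Fin 3 → R}
    (he : e ⬝ᵥ e = 1) (hev : e ⬝ᵥ v = 0) : e ⨯₃ (e ⨯₃ v) = -v := by
  rw [cross_cross_eq_smul_sub_smul', hev, he, zero_smul, one_smul, zero_sub]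

def grad (f : V3 → ℝ) (x : V3) : V3 := fun j => pderivR f j x

theorem dotProduct_grad (f : V3 → ℝ) (v x : V3) : v ⬝ᵥ grad f x = fderiv ℝ f x v := by
  conv_rhs => rw [pi_eq_sum_univ' v]
  simp only [dotProduct, grad, pderivR, map_sum, map_smul, smul_eq_mul]

theorem fderiv_apply_eq_zero_of_grad_eq_smul_cross {ψ : V3 → ℝ} {x e v : V3} {lam : ℝ}
    (hgrad : grad ψ x = lam • e ⨯₃ v) : fderiv ℝ ψ x e = 0 ∧ fderiv ℝ ψ x v = 0 := by
  simp only [← dotProduct_grad, hgrad, dotProduct_smul, dot_self_cross, dot_cross_self,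
    smul_zero, and_self]

theorem dotProduct_grad_apply_eq_add_curlR_cross (u : V3 → V3) (v x : V3) (k : Fin 3) :
    v ⬝ᵥ grad (fun y => u y k) x
      = ∑ j, v j * pderivR (fun y => u y j) k x + (curlR u x ⨯₃ v) k := by
  fin_cases k <;>
  · simp only [dotProduct, grad, curlR, cross_apply, Fin.sum_univ_three, Fin.zero_eta, Fin.mk_one,
      Fin.reduceFinMk, Fin.isValue, Matrix.cons_val_zero, Matrix.cons_val_one, Matrix.cons_val,
      Nat.succ_eq_add_one, Nat.reduceAdd]
    ring

theorem pderivR_half_sum_sq_add_sq {v : V3 → V3} {ψ : V3 → ℝ} {x : V3}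
    (hv : ∀ j, DifferentiableAt ℝ (fun y => v y j) x) (hψ : DifferentiableAt ℝ ψ x) (k : Fin 3) :
    pderivR (fun y => 2⁻¹ * (∑ j, v y j ^ 2 + ψ y ^ 2)) k x
      = ∑ j, v x j * pderivR (fun y => v y j) k x + ψ x * pderivR ψ k x := by
  have h : HasFDerivAt (fun y => ∑ j, v y j ^ 2 + ψ y ^ 2) _ x :=
    (HasFDerivAt.fun_sum fun j _ => (hv j).hasFDerivAt.pow 2).add (hψ.hasFDerivAt.pow 2)
  rw [pderivR, (h.const_mul 2⁻¹).fderiv]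
  simp [pderivR, mul_assoc, ← Finset.mul_sum]

section VerticalComponent

variable {uPar : V3 → V3} {ψ : V3 → ℝ} {g : ℝ → ℝ} {e x : V3}

theorem hasFDerivAt_add_vertical (huPar : ∀ k, DifferentiableAt ℝ (fun y => uPar y k) x)
    (hψ : DifferentiableAt ℝ ψ x) (hg : DifferentiableAt ℝ g (ψ x)) (k : Fin 3) :
    HasFDerivAt (fun y => uPar y k + g (ψ y) * e k)
      (fderiv ℝ (fun y => uPar y k) x + e k • deriv g (ψ x) • fderiv ℝ ψ x) x :=
  (huPar k).hasFDerivAt.add ((hg.hasDerivAt.comp_hasFDerivAt x hψ.hasFDerivAt).mul_const (e k))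

theorem sum_pderivR_add_vertical_eq_zero
    (huPar : ∀ k, DifferentiableAt ℝ (fun y => uPar y k) x)
    (hψ : DifferentiableAt ℝ ψ x) (hg : DifferentiableAt ℝ g (ψ x))
    (hdiv : ∑ i, pderivR (fun y => uPar y i) i x = 0) (hψe : fderiv ℝ ψ x e = 0) :
    ∑ i, pderivR (fun y => uPar y i + g (ψ y) * e i) i x = 0 := by
  have h : ∑ i, e i * pderivR ψ i x = 0 := by rw [← hψe, ← dotProduct_grad]; rfl
  simp only [pderivR, (hasFDerivAt_add_vertical huPar hψ hg _).fderiv] at hdiv h ⊢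
  simp only [add_apply, smul_apply, smul_eq_mul, Finset.sum_add_distrib, hdiv, zero_add]
  rw [← mul_zero (deriv g (ψ x)), ← h, Finset.mul_sum]
  exact Finset.sum_congr rfl fun i _ => by ring

theorem sum_mul_pderivR_add_vertical_eq_pderivR {lam : ℝ}
    (huPar : ∀ k, DifferentiableAt ℝ (fun y => uPar y k) x)
    (hψ : DifferentiableAt ℝ ψ x) (hg : DifferentiableAt ℝ g (ψ x))
    (hcurl : curlR uPar x = (lam * ψ x) • e) (hgrad : grad ψ x = lam • e ⨯₃ uPar x)
    (hvert : ∀ k, fderiv ℝ (fun y => uPar y k) x e = 0) (k : Fin 3) :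
    ∑ j, (uPar x j + g (ψ x) * e j) * pderivR (fun y => uPar y k + g (ψ y) * e k) j x
      = pderivR (fun y => 2⁻¹ * (∑ j, uPar y j ^ 2 + ψ y ^ 2)) k x := by
  obtain ⟨hψe, hψu⟩ := fderiv_apply_eq_zero_of_grad_eq_smul_cross hgrad
  have hconv : ∑ j, (uPar x j + g (ψ x) * e j) * pderivR (fun y => uPar y k + g (ψ y) * e k) j x
      = fderiv ℝ (fun y => uPar y k) x (uPar x) := by
    change (uPar x + g (ψ x) • e) ⬝ᵥ grad (fun y => uPar y k + g (ψ y) * e k) x = _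
    rw [dotProduct_grad, (hasFDerivAt_add_vertical huPar hψ hg k).fderiv]
    simp [map_add, map_smul, hvert, hψe, hψu]
  have hψk : pderivR ψ k x = (lam • e ⨯₃ uPar x) k := congrFun hgrad k
  rw [hconv, pderivR_half_sum_sq_add_sq huPar hψ k, ← dotProduct_grad,
    dotProduct_grad_apply_eq_add_curlR_cross, hcurl, hψk]
  simp only [map_smul, LinearMap.smul_apply, Pi.smul_apply, smul_eq_mul]
  ring

end VerticalComponent

section FourierSeries

def planeWave (c : ℂ) (n x : V3) : ℝ := (c * Complex.exp (Complex.I * ((n ⬝ᵥ x : ℝ) : ℂ))).re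

def fourierSum (S : Finset V3) (c : V3 → ℂ) (x : V3) : ℝ := ∑ n ∈ S, planeWave (c n) n x

def fourierField (S : Finset V3) (c : V3 → ℂ) (a : V3 → V3) (x : V3) : V3 :=
  ∑ n ∈ S, planeWave (c n) n x • a n

theorem planeWave_mul_ofReal (c : ℂ) (r : ℝ) (n x : V3) :
    planeWave (c * r) n x = planeWave c n x * r := by
  rw [planeWave, planeWave, mul_right_comm, Complex.re_mul_ofReal]

theorem planeWave_I_mul_I_mul (c : ℂ) (n x : V3) :
    planeWave (Complex.I * (Complex.I * c)) n x = -planeWave c n x := by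
  simp only [planeWave, ← mul_assoc, Complex.I_mul_I, neg_mul, one_mul, Complex.neg_re]

theorem hasFDerivAt_planeWave (c : ℂ) (n x : V3) :
    HasFDerivAt (planeWave c n)
      (planeWave (Complex.I * c) n x • (dotProductBilin ℝ ℝ n).toContinuousLinearMap) x := by
  have hwave : HasDerivAt (fun t : ℝ => (c * Complex.exp (Complex.I * t)).re)
      (Complex.I * c * Complex.exp (Complex.I * ((n ⬝ᵥ x : ℝ) : ℂ))).re (n ⬝ᵥ x) := by
    have h : HasDerivAt (fun z : ℂ => c * Complex.exp (Complex.I * z))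
        (c * (Complex.exp (Complex.I * ((n ⬝ᵥ x : ℝ) : ℂ)) * Complex.I)) ((n ⬝ᵥ x : ℝ) : ℂ) := by
      simpa using (((hasDerivAt_id _).const_mul Complex.I).cexp).const_mul c
    convert h.real_of_complex using 2
    ring
  exact hwave.comp_hasFDerivAt x (dotProductBilin ℝ ℝ n).toContinuousLinearMap.hasFDerivAt

variable (S : Finset V3) (c : V3 → ℂ) (a : V3 → V3) (x : V3)

theorem hasFDerivAt_fourierSum :
    HasFDerivAt (fourierSum S c)
      (∑ n ∈ S, planeWave (Complex.I * c n) n x • (dotProductBilin ℝ ℝ n).toContinuousLinearMap)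
      x :=
  HasFDerivAt.fun_sum fun n _ => hasFDerivAt_planeWave (c n) n x

theorem fderiv_fourierSum_apply (v : V3) :
    fderiv ℝ (fourierSum S c) x v = ∑ n ∈ S, planeWave (Complex.I * c n) n x * (n ⬝ᵥ v) := by
  simp [(hasFDerivAt_fourierSum S c x).fderiv]

theorem grad_fourierSum :
    grad (fourierSum S c) x = ∑ n ∈ S, planeWave (Complex.I * c n) n x • n := by
  ext j
  simp [grad, pderivR, fderiv_fourierSum_apply]

theorem fourierField_apply_eq_fourierSum (k : Fin 3) :
    (fun y => fourierField S c a y k) = fourierSum S (fun n => c n * a n k) := by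
  ext y
  simp [fourierField, fourierSum, planeWave_mul_ofReal]

theorem differentiableAt_fourierField_apply (k : Fin 3) :
    DifferentiableAt ℝ (fun y => fourierField S c a y k) x := by
  rw [fourierField_apply_eq_fourierSum]
  exact (hasFDerivAt_fourierSum _ _ x).differentiableAt

theorem fderiv_fourierField_apply (k : Fin 3) (v : V3) :
    fderiv ℝ (fun y => fourierField S c a y k) x v
      = ∑ n ∈ S, planeWave (Complex.I * c n) n x * (n ⬝ᵥ v) * a n k := by
  simp [fourierField_apply_eq_fourierSum, fderiv_fourierSum_apply, ← mul_assoc,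
    planeWave_mul_ofReal, mul_right_comm]

theorem pderivR_fourierField (j k : Fin 3) :
    pderivR (fun y => fourierField S c a y k) j x
      = ∑ n ∈ S, planeWave (Complex.I * c n) n x * n j * a n k := by
  simp [pderivR, fderiv_fourierField_apply]

theorem sum_pderivR_fourierField :
    ∑ k, pderivR (fun y => fourierField S c a y k) k x
      = ∑ n ∈ S, planeWave (Complex.I * c n) n x * (n ⬝ᵥ a n) := by
  simp only [pderivR_fourierField, dotProduct, Finset.mul_sum, mul_assoc]
  exact Finset.sum_comm

theorem curlR_fourierField :
    curlR (fourierField S c a) x = ∑ n ∈ S, planeWave (Complex.I * c n) n x • (n ⨯₃ a n) := by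
  ext l
  fin_cases l <;>
  · simp only [curlR, pderivR_fourierField, ← Finset.sum_sub_distrib, cross_apply,
      Finset.sum_apply, Matrix.smul_cons, Matrix.smul_empty, smul_eq_mul, Fin.zero_eta, Fin.mk_one,
      Fin.reduceFinMk, Fin.isValue, Matrix.cons_val_zero, Matrix.cons_val_one, Matrix.cons_val,
      Nat.succ_eq_add_one, Nat.reduceAdd]
    exact Finset.sum_congr rfl fun n _ => by ring

end FourierSeries

def planarField (S : Finset V3) (α : V3 → ℂ) (e : V3) (lam : ℝ) : V3 → V3 :=
  fourierField S α (fun n => e ⨯₃ (lam⁻¹ • n))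

def planarVorticity (S : Finset V3) (α : V3 → ℂ) : V3 → ℝ :=
  fourierSum S (fun n => Complex.I * α n)

section PlanarFlow

variable {S : Finset V3} (α : V3 → ℂ) {e : V3} {lam : ℝ} (x : V3)

theorem differentiableAt_planarField_apply (k : Fin 3) :
    DifferentiableAt ℝ (fun y => planarField S α e lam y k) x :=
  differentiableAt_fourierField_apply _ _ _ x k

theorem differentiableAt_planarVorticity : DifferentiableAt ℝ (planarVorticity S α) x :=
  (hasFDerivAt_fourierSum _ _ x).differentiableAt

theorem sum_pderivR_planarField : ∑ k, pderivR (fun y => planarField S α e lam y k) k x = 0 := by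
  simp [planarField, sum_pderivR_fourierField]

theorem fderiv_planarField_apply_normal (hplane : ∀ n ∈ S, n ⬝ᵥ e = 0) (k : Fin 3) :
    fderiv ℝ (fun y => planarField S α e lam y k) x e = 0 := by
  rw [planarField, fderiv_fourierField_apply]
  exact Finset.sum_eq_zero fun n hn => by simp [hplane n hn]

theorem curlR_planarField (hplane : ∀ n ∈ S, n ⬝ᵥ e = 0)
    (hcirc : ∀ n ∈ S, n ⬝ᵥ n = lam ^ 2) :
    curlR (planarField S α e lam) x = (lam * planarVorticity S α x) • e := by
  rw [planarField, curlR_fourierField, planarVorticity, fourierSum, Finset.mul_sum,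
    Finset.sum_smul]
  refine Finset.sum_congr rfl fun n hn => ?_
  rw [cross_cross_inv_smul_eq_smul (hplane n hn) (hcirc n hn), smul_smul, mul_comm]

theorem grad_planarVorticity (hlam : lam ≠ 0) (he : e ⬝ᵥ e = 1)
    (hplane : ∀ n ∈ S, n ⬝ᵥ e = 0) :
    grad (planarVorticity S α) x = lam • e ⨯₃ planarField S α e lam x := by
  rw [planarVorticity, grad_fourierSum, planarField, fourierField, map_sum, Finset.smul_sum]
  refine Finset.sum_congr rfl fun n hn => ?_
  have hen : e ⬝ᵥ lam⁻¹ • n = 0 := by rw [dotProduct_smul, dotProduct_comm, hplane n hn, smul_zero]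
  rw [planeWave_I_mul_I_mul, map_smul, cross_cross_eq_neg_of_dotProduct he hen, smul_comm,
    smul_neg, smul_inv_smul₀ hlam, neg_smul, smul_neg]

end PlanarFlow

theorem planar_flow_with_polynomial_vertical_component_stationary_general
    (ePerp : V3) (hunit : norm3 ePerp = 1) (lam : ℝ) (hlam : 0 < lam)
    (S : Finset V3)
    (hplane : ∀ n ∈ S, dotR n ePerp = 0)
    (hcirc : ∀ n ∈ S, norm3 n = lam)
    (α : V3 → ℂ)
    (Q : Polynomial ℝ) (cst : ℝ) :
    let uPar : V3 → V3 := fun x k =>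
      (∑ n ∈ S, α n * Complex.exp (Complex.I * ((dotR n x : ℝ) : ℂ)) *
        (((crossR ePerp (lam⁻¹ • n)) k : ℝ) : ℂ)).re
    let ω : V3 → ℝ := fun x =>
      (∑ n ∈ S, Complex.I * α n * Complex.exp (Complex.I * ((dotR n x : ℝ) : ℂ))).re
    let u : V3 → V3 := fun x k => uPar x k + (Q.eval (ω x) - cst) * ePerp k
    (∀ x, ∑ i, pderivR (fun y => u y i) i x = 0) ∧
    (∃ pr : V3 → ℝ, ∀ x k,
      (∑ j, u x j * pderivR (fun y => u y k) j x) = pderivR pr k x) := by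
  intro uPar ω u
  have huPar : uPar = planarField S α ePerp lam := by
    ext y k
    simp only [uPar, planarField, fourierField, planeWave, Complex.re_sum, Complex.re_mul_ofReal,
      Finset.sum_apply, Pi.smul_apply, smul_eq_mul, crossR_eq_cross, dotR_eq_dotProduct]
  have hω : ω = planarVorticity S α := by
    ext y
    simp only [ω, planarVorticity, fourierSum, planeWave, Complex.re_sum, dotR_eq_dotProduct]
  clear_value uPar ω
  subst huPar hω
  have he : ePerp ⬝ᵥ ePerp = 1 := by simpa using dotProduct_self_eq_sq_of_norm3_eq hunit
  have hcirc_sq n (hn : n ∈ S) : n ⬝ᵥ n = lam ^ 2 := dotProduct_self_eq_sq_of_norm3_eq (hcirc n hn)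
  have hgrad x := grad_planarVorticity α x hlam.ne' he hplane
  have hQ t : DifferentiableAt ℝ (fun s => Q.eval s - cst) t := (Q.differentiable t).sub_const cst
  refine ⟨fun x => ?_, fun y => 2⁻¹ * (∑ j, planarField S α ePerp lam y j ^ 2
    + planarVorticity S α y ^ 2), fun x k => ?_⟩
  · exact sum_pderivR_add_vertical_eq_zero (differentiableAt_planarField_apply α x)
      (differentiableAt_planarVorticity α x) (hQ _) (sum_pderivR_planarField α x)
      (fderiv_apply_eq_zero_of_grad_eq_smul_cross (hgrad x)).1
  · exact sum_mul_pderivR_add_vertical_eq_pderivR (differentiableAt_planarField_apply α x)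
      (differentiableAt_planarVorticity α x) (hQ _) (curlR_planarField α x hplane hcirc_sq)
      (hgrad x) (fderiv_planarField_apply_normal α x hplane) k

/-- If `u∥` is a real planar flow with Fourier support on a circle of radius
`λ > 0` in a plane `P` through the origin, `ω` is the scalar with `∇ × u∥ = λ ω e⊥`, and `Q` is
a real polynomial, then `u = u∥ + (Q(ω) − c) e⊥` (where `c` is any constant, e.g. the mean of
`Q(ω)`) is a stationary Euler flow: `∇ · u = 0` and `(u · ∇)u` is a gradient field. -/
theorem planar_flow_with_polynomial_vertical_component_stationary
    (ePerp : V3) (hunit : norm3 ePerp = 1) (lam : ℝ) (hlam : 0 < lam)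
    (S : Finset V3)
    (hplane : ∀ n ∈ S, dotR n ePerp = 0)
    (hcirc : ∀ n ∈ S, norm3 n = lam)
    (hsymm : ∀ n ∈ S, -n ∈ S)
    (α : V3 → ℂ) (hα : ∀ n ∈ S, α (-n) = -(starRingEnd ℂ) (α n))
    (Q : Polynomial ℝ) (cst : ℝ) :
    let uPar : V3 → V3 := fun x k =>
      (∑ n ∈ S, α n * Complex.exp (Complex.I * ((dotR n x : ℝ) : ℂ)) *
        (((crossR ePerp (lam⁻¹ • n)) k : ℝ) : ℂ)).re
    let ω : V3 → ℝ := fun x =>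
      (∑ n ∈ S, Complex.I * α n * Complex.exp (Complex.I * ((dotR n x : ℝ) : ℂ))).re
    let u : V3 → V3 := fun x k => uPar x k + (Q.eval (ω x) - cst) * ePerp k
    (∀ x, ∑ i, pderivR (fun y => u y i) i x = 0) ∧
    (∃ pr : V3 → ℝ, ∀ x k,
      (∑ j, u x j * pderivR (fun y => u y k) j x) = pderivR pr k x) :=
  planar_flow_with_polynomial_vertical_component_stationary_general ePerp hunit lam hlam S hplane
    hcirc α Q cst
end
end

section
/- For n = (n¹, n², n³) ∈ ℝ³ \ {0}, let J_n : ℂ³ → ℂ³ be defined by J_n v = P_n(e₃ × (P_n v)), where P_n is the orthogonal projection onto {v : n·v = 0} and e₃ = (0,0,1). Then for every v ∈ ℂ³ with n · v = 0: J_n v = (n³/|n|) ((n/|n|) × v), and consequently J_n² v = −(n³/|n|)² v, so that exp(−Ω t J_n) v = cos(Ω t n³/|n|) v − sin(Ω t n³/|n|) ((n/|n|) × v) for all t, Ω ∈ ℝ. -/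
/-! For `v ⊥ n` the vector triple product gives
`|n|² (e₃ × v) - (n · (e₃ × v)) n = n × ((e₃ × v) × n) = n³ (n × v)`,
so on the plane `n^⊥` the operator `J_n` is `n³/|n|` times the quarter turn `v ↦ n̂ × v`.
Hence `v ± i (n̂ × v)` are eigenvectors of `J_n` with eigenvalues `∓ i n³/|n|`, and the exponential
is read off from the exponential series on these eigenvectors. -/

open scoped Classical

noncomputable section

open Matrix

section CrossProduct

variable {R : Type*} [CommRing R] {a v : Fin 3 → R}

theorem cross_sub_dotProduct_smul_eq_smul_cross (e : Fin 3 → R) (ha : a ⬝ᵥ a = 1)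
    (hv : a ⬝ᵥ v = 0) : e ⨯₃ v - (a ⬝ᵥ e ⨯₃ v) • a = (e ⬝ᵥ a) • a ⨯₃ v :=
  calc e ⨯₃ v - (a ⬝ᵥ e ⨯₃ v) • a = (a ⬝ᵥ a) • e ⨯₃ v - (e ⨯₃ v ⬝ᵥ a) • a := by
        rw [ha, one_smul, dotProduct_comm]
    _ = a ⨯₃ (e ⨯₃ v ⨯₃ a) := (cross_cross_eq_smul_sub_smul' _ _ _).symm
    _ = (e ⬝ᵥ a) • a ⨯₃ v := by
        rw [cross_cross_eq_smul_sub_smul, dotProduct_comm v, hv, zero_smul, sub_zero, map_smul]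

theorem cross_cross_self_eq_neg (ha : a ⬝ᵥ a = 1) (hv : a ⬝ᵥ v = 0) : a ⨯₃ (a ⨯₃ v) = -v := by
  rw [cross_cross_eq_smul_sub_smul', hv, ha, zero_smul, one_smul, zero_sub]

end CrossProduct

section MatrixExp

variable {m : Type*} [Fintype m] [DecidableEq m]

theorem Matrix.exp_mulVec_of_mulVec_eq_smul {A : Matrix m m ℂ} {μ : ℂ} {p : m → ℂ}
    (h : A *ᵥ p = μ • p) : NormedSpace.exp A *ᵥ p = NormedSpace.exp μ • p := by
  -- `exp` only sees the topology; a submultiplicative norm is needed to sum its series.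
  let : NormedRing (Matrix m m ℂ) := Matrix.linftyOpNormedRing
  let : NormedAlgebra ℂ (Matrix m m ℂ) := Matrix.linftyOpNormedAlgebra
  have hpow (k : ℕ) : A ^ k *ᵥ p = μ ^ k • p := by
    induction k with
    | zero => simp
    | succ k ih => rw [pow_succ, ← mulVec_mulVec, h, mulVec_smul, ih, smul_smul, ← pow_succ']
  have hA := (NormedSpace.exp_series_hasSum_exp' (𝕂 := ℂ) A).map
    (mulVec.addMonoidHomLeft p) (continuous_id.matrix_mulVec continuous_const)
  have hμ := (NormedSpace.exp_series_hasSum_exp' (𝕂 := ℂ) μ).smul_const p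
  refine hA.unique (hμ.congr_fun fun k => ?_)
  simp [mulVec.addMonoidHomLeft, smul_mulVec, hpow, smul_smul]

theorem Matrix.exp_mulVec_of_rotation {A : Matrix m m ℂ} {θ : ℂ} {v u : m → ℂ}
    (hv : A *ᵥ v = θ • u) (hu : A *ᵥ u = -θ • v) :
    NormedSpace.exp A *ᵥ v = Complex.cos θ • v + Complex.sin θ • u := by
  have hplus : A *ᵥ (v + Complex.I • u) = (-θ * Complex.I) • (v + Complex.I • u) := by
    rw [mulVec_add, mulVec_smul, hv, hu]
    linear_combination (norm := module) Complex.I_sq • (θ • u)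
  have hminus : A *ᵥ (v - Complex.I • u) = (θ * Complex.I) • (v - Complex.I • u) := by
    rw [mulVec_sub, mulVec_smul, hv, hu]
    linear_combination (norm := module) Complex.I_sq • (θ • u)
  have hsplit : v = (2⁻¹ : ℂ) • ((v + Complex.I • u) + (v - Complex.I • u)) := by module
  rw [hsplit, mulVec_smul, mulVec_add, exp_mulVec_of_mulVec_eq_smul hplus,
    exp_mulVec_of_mulVec_eq_smul hminus, ← Complex.exp_eq_exp_ℂ, Complex.cos, Complex.sin]
  module

end MatrixExp

section Frequency

theorem crossC_eq_cross (u v : C3) : crossC u v = u ⨯₃ v := (cross_apply u v).symm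

theorem toC_smul (c : ℝ) (v : V3) : toC (c • v) = (c : ℂ) • toC v := by
  ext i
  simp [toC]

theorem toC_dotProduct_toC (u v : V3) : toC u ⬝ᵥ toC v = dotR u v := by
  simp [toC, dotProduct, dotR]

theorem dotR_self_nonneg (n : V3) : 0 ≤ dotR n n :=
  Finset.sum_nonneg fun i _ => mul_self_nonneg (n i)

theorem norm3_mul_self (n : V3) : norm3 n * norm3 n = dotR n n :=
  Real.mul_self_sqrt (dotR_self_nonneg n)

variable {n : V3}

theorem norm3_ne_zero (hn : n ≠ 0) : norm3 n ≠ 0 := by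
  have hpos : 0 < dotR n n := (dotR_self_nonneg n).lt_of_ne' (dotProduct_self_eq_zero.not.mpr hn)
  exact (Real.sqrt_pos.mpr hpos).ne'

theorem toC_normalize_dotProduct_self (hn : n ≠ 0) :
    toC ((norm3 n)⁻¹ • n) ⬝ᵥ toC ((norm3 n)⁻¹ • n) = 1 := by
  rw [toC_smul, smul_dotProduct, dotProduct_smul, toC_dotProduct_toC, ← norm3_mul_self]
  have : (norm3 n : ℂ) ≠ 0 := Complex.ofReal_ne_zero.mpr (norm3_ne_zero hn)
  simp only [smul_eq_mul]
  push_cast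
  field_simp

theorem projC_eq_sub_dotProduct_smul (hn : n ≠ 0) (w : C3) :
    projC n w = w - (toC ((norm3 n)⁻¹ • n) ⬝ᵥ w) • toC ((norm3 n)⁻¹ • n) := by
  rw [projC, toC_smul, smul_dotProduct, smul_smul, ← norm3_mul_self]
  congr 2
  change (toC n ⬝ᵥ w) / _ = _
  have := norm3_ne_zero hn
  push_cast
  rw [smul_eq_mul]
  field_simp

theorem projC_cross_projC (hn : n ≠ 0) {w : C3} (hw : toC ((norm3 n)⁻¹ • n) ⬝ᵥ w = 0) :
    projC n (crossC (toC ![0, 0, 1]) (projC n w)) =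
      ((n 2 / norm3 n : ℝ) : ℂ) • crossC (toC ((norm3 n)⁻¹ • n)) w := by
  have hproj : projC n w = w := by rw [projC_eq_sub_dotProduct_smul hn, hw, zero_smul, sub_zero]
  have he : toC ![0, 0, 1] ⬝ᵥ toC ((norm3 n)⁻¹ • n) = ((n 2 / norm3 n : ℝ) : ℂ) := by
    rw [toC_dotProduct_toC]
    simp [dotR, Fin.sum_univ_three, div_eq_inv_mul]
  rw [hproj, projC_eq_sub_dotProduct_smul hn, crossC_eq_cross, crossC_eq_cross,
    cross_sub_dotProduct_smul_eq_smul_cross _ (toC_normalize_dotProduct_self hn) hw, he]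

end Frequency

/-- With `J_n v = P_n(e₃ × (P_n v))`, for every `v ⊥ n` one has
`J_n v = (n³/|n|)((n/|n|) × v)`, `J_n² v = −(n³/|n|)² v`, and hence
`exp(−Ω t J_n) v = cos(Ω t n³/|n|) v − sin(Ω t n³/|n|) ((n/|n|) × v)`. -/
theorem coriolis_matrix_action
    (n : V3) (hn : n ≠ 0) (J : Matrix (Fin 3) (Fin 3) ℂ)
    (hJ : ∀ v : C3, J.mulVec v = projC n (crossC (toC ![0, 0, 1]) (projC n v))) :
    ∀ v : C3, dotC (toC n) v = 0 →
      J.mulVec v = ((n 2 / norm3 n : ℝ) : ℂ) • crossC (toC ((norm3 n)⁻¹ • n)) v ∧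
      J.mulVec (J.mulVec v) = (-(((n 2 / norm3 n) ^ 2 : ℝ)) : ℂ) • v ∧
      ∀ t Ω : ℝ,
        (NormedSpace.exp ((-(Ω * t) : ℂ) • J)).mulVec v =
          ((Real.cos (Ω * t * (n 2 / norm3 n)) : ℝ) : ℂ) • v -
          ((Real.sin (Ω * t * (n 2 / norm3 n)) : ℝ) : ℂ) • crossC (toC ((norm3 n)⁻¹ • n)) v := by
  intro v hv
  have hva : toC ((norm3 n)⁻¹ • n) ⬝ᵥ v = 0 := by
    rw [toC_smul, smul_dotProduct]
    exact smul_eq_zero_of_right _ hv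
  set a := toC ((norm3 n)⁻¹ • n)
  set μ := n 2 / norm3 n
  have hJv : J *ᵥ v = (μ : ℂ) • crossC a v := by rw [hJ, projC_cross_projC hn hva]
  have hJu : J *ᵥ crossC a v = -(μ : ℂ) • v := by
    rw [hJ, projC_cross_projC hn (by rw [crossC_eq_cross]; exact dot_self_cross a v),
      crossC_eq_cross, crossC_eq_cross,
      cross_cross_self_eq_neg (toC_normalize_dotProduct_self hn) hva, smul_neg, neg_smul]
  refine ⟨hJv, ?_, fun t Ω => ?_⟩
  · rw [hJv, mulVec_smul, hJu, smul_smul]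
    congr 1
    push_cast
    ring
  · have hexp := exp_mulVec_of_rotation (A := (-(Ω * t) : ℂ) • J) (θ := ((Ω * t * μ : ℝ) : ℂ))
      (u := -crossC a v) (by rw [smul_mulVec, hJv]; push_cast; module)
      (by rw [smul_mulVec, mulVec_neg, hJu]; push_cast; module)
    rw [Complex.ofReal_cos, Complex.ofReal_sin, hexp, smul_neg, ← sub_eq_add_neg]
end
end
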